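/- Let r ≥ 2, let M be a simple binary matroid of rank r, and let e be a loose element of M. Suppose there is a basis B of M such that B ∪ {e} is a circuit of M. Then either M is isomorphic to L_r with e corresponding to the element labeled by the all-ones column, or there is a restriction N of M_r whose ground set contains the distinguished element z and an isomorphism from M to N mapping e to z. -/

import Mathlib

namespace LoosePaper

open Set
open scoped Matroid

variable {α β : Type*}

/-- A circuit of a matroid: a minimal dependent set. -/
def Circuit (M : Matroid α) (C : Set α) : Prop :=
  M.Dep C ∧ ∀ D, M.Dep D → D ⊆ C → D = C

/-- The rank of a matroid: the (common) cardinality of its bases. -/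
noncomputable def rank (M : Matroid α) : ℕ :=
  sInf {n | ∃ B, M.IsBase B ∧ B.ncard = n}

/-- An element is loose if every circuit containing it has size at least the rank. -/
def Loose (M : Matroid α) (e : α) : Prop :=
  e ∈ M.E ∧ ∀ C, Circuit M C → e ∈ C → rank M ≤ C.ncard

/-- An element is free if every circuit containing it is spanning. -/
def FreeElt (M : Matroid α) (e : α) : Prop :=
  e ∈ M.E ∧ ∀ C, Circuit M C → e ∈ C → M.closure C = M.E

/-- A coloop: an element contained in every base. -/
def Coloop (M : Matroid α) (e : α) : Prop :=
  e ∈ M.E ∧ ∀ B, M.IsBase B → e ∈ B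

def NoColoops (M : Matroid α) : Prop := ∀ e, ¬ Coloop M e

/-- A matroid is simple if every pair of its elements is independent. -/
def Simple (M : Matroid α) : Prop :=
  ∀ e ∈ M.E, ∀ f ∈ M.E, M.Indep {e, f}

/-- A matroid is paving if every circuit has size at least the rank. -/
def Paving (M : Matroid α) : Prop :=
  ∀ C, Circuit M C → rank M ≤ C.ncard

/-- `M` is representable over the field `F`. -/
def Representable (M : Matroid α) (F : Type*) [Field F] : Prop :=
  ∃ (ι : Type) (v : α → ι → F),
    ∀ I, I ⊆ M.E → (M.Indep I ↔ LinearIndependent F (fun x : I => v x.1))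

/-- `N` is the vector matroid, on ground set all of `η`, of the matrix whose
column labelled by `c : η` is `A c`. -/
def IsVectorMatroidOn (F : Type*) [Field F] {η ι : Type*} (A : η → ι → F)
    (N : Matroid η) : Prop :=
  N.E = Set.univ ∧ ∀ I : Set η, (N.Indep I ↔ LinearIndependent F (fun x : I => A x.1))

/-- `φ` is an isomorphism from `M` to `N`. -/
def IsIsoTo (M : Matroid α) (N : Matroid β) (φ : α → β) : Prop :=
  Set.BijOn φ M.E N.E ∧ ∀ I, I ⊆ M.E → (M.Indep I ↔ N.Indep (φ '' I))

/-- The matrix `[I_r | D]` of the matroid `M_r`; the column `Sum.inl i` is the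
`i`-th standard basis vector, the column `Sum.inr 0` (the distinguished element `z`)
is the all-ones vector, and for `1 ≤ j ≤ r-1` the column `Sum.inr j` has ones
exactly in rows `0` and `j` (`0`-indexed). -/
def MrMatrix (r : ℕ) : (Fin r ⊕ Fin r) → Fin r → ZMod 2
  | Sum.inl i => fun k => if k = i then 1 else 0
  | Sum.inr j => fun k =>
      if j.val = 0 then 1 else if k.val = 0 ∨ k = j then 1 else 0

/-- The matrix `[I_r | D]` of the matroid `N_r`; the column `Sum.inr 0`
(the distinguished element `z`) is `(0,1,…,1)ᵀ`, and for `1 ≤ j ≤ r-2` the column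
`Sum.inr j` has ones exactly in rows `0`, `1` and `j+1` (`0`-indexed). -/
def NrMatrix (r : ℕ) : (Fin r ⊕ Fin (r - 1)) → Fin r → ZMod 2
  | Sum.inl i => fun k => if k = i then 1 else 0
  | Sum.inr j => fun k =>
      if j.val = 0 then (if k.val = 0 then 0 else 1)
      else if k.val = 0 ∨ k.val = 1 ∨ k.val = j.val + 1 then 1 else 0

/-- The matrix `[I_r | D]` of the matroid `L_r`; the columns of `D` are the all-ones
vector, `(1,1,0,…,0)ᵀ`, `(1,0,1,0,…,0)ᵀ` and `(0,1,1,0,…,0)ᵀ`. -/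
def LrMatrix (r : ℕ) : (Fin r ⊕ Fin 4) → Fin r → ZMod 2
  | Sum.inl i => fun k => if k = i then 1 else 0
  | Sum.inr j => fun k =>
      if j = 0 then 1
      else if j = 1 then (if k.val = 0 ∨ k.val = 1 then 1 else 0)
      else if j = 2 then (if k.val = 0 ∨ k.val = 2 then 1 else 0)
      else if k.val = 1 ∨ k.val = 2 then 1 else 0

/-- The matrix `[I_r | D]` of the matroid `J_r`; the columns of `D` are
`(0,1,1,…,1)ᵀ`, `(1,1,1,0,…,0)ᵀ`, `(1,1,0,1,0,…,0)ᵀ` and `(1,0,1,1,0,…,0)ᵀ`. -/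
def JrMatrix (r : ℕ) : (Fin r ⊕ Fin 4) → Fin r → ZMod 2
  | Sum.inl i => fun k => if k = i then 1 else 0
  | Sum.inr j => fun k =>
      if j = 0 then (if k.val = 0 then 0 else 1)
      else if j = 1 then (if k.val = 0 ∨ k.val = 1 ∨ k.val = 2 then 1 else 0)
      else if j = 2 then (if k.val = 0 ∨ k.val = 1 ∨ k.val = 3 then 1 else 0)
      else if k.val = 0 ∨ k.val = 2 ∨ k.val = 3 then 1 else 0

/-- A matrix over `GF(3)` whose vector matroid is `U_{2,4}`. -/
def U24Matrix : Fin 4 → Fin 2 → ZMod 3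
  | 0 => fun k => if k = 0 then 1 else 0
  | 1 => fun k => if k = 1 then 1 else 0
  | 2 => fun _ => 1
  | 3 => fun k => if k = 0 then 1 else 2

/-- A `GF(3)`-matrix representing the matroid obtained from a circuit
`{e, c_0, …, c_{n-1}}` (where `e` is the element `Sum.inl ()`) by 2-summing a copy
of `U_{2,4}` across each element `c_d` with `d ∈ D`.  For `d ∉ D` the element
`Sum.inr (d, 0)` is `c_d`, and for `d ∈ D` the elements `Sum.inr (d, j)`,
`j = 0, 1, 2`, are the three elements of the copy of `U_{2,4}` other than its
basepoint. -/
def thetaMatrix (n : ℕ) (D : Finset (Fin n)) :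
    (Unit ⊕ Fin n × Fin 3) → (Fin n ⊕ Fin n) → ZMod 3
  | Sum.inl _ => fun row => Sum.elim (fun _ => 1) (fun _ => 0) row
  | Sum.inr (d, j) => fun row =>
      let ed : (Fin n ⊕ Fin n) → ZMod 3 :=
        Sum.elim (fun i => if i = d then 1 else 0) (fun _ => 0)
      let wd : (Fin n ⊕ Fin n) → ZMod 3 :=
        Sum.elim (fun _ => 0) (fun i => if i = d then 1 else 0)
      if d ∈ D then
        (if j = 0 then wd row else if j = 1 then ed row + wd row else ed row - wd row)
      else ed row

/-- The ground set of the 2-sum construction: the circuit element `e`, the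
untouched circuit elements `c_d` for `d ∉ D`, and three `U_{2,4}`-elements for
each `d ∈ D`. -/
def thetaGround (n : ℕ) (D : Finset (Fin n)) : Set (Unit ⊕ Fin n × Fin 3) :=
  {x | ∀ d : Fin n, ∀ j : Fin 3, x = Sum.inr (d, j) → (j = 0 ∨ d ∈ D)}

/-!
Represent `M` over `GF(2)` in the coordinates of the basis `B`: the elements of `B` become unit
vectors and, as `B ∪ {e}` is a circuit, `e` becomes the all-ones vector. If `Y` is a set of `k`
elements other than `e`, then `e` is spanned by `Y` and the basis elements outside the support of
`∑ Y`, so looseness allows that support at most `k + 1` rows. By simplicity, every element outside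
`B ∪ {e}` is therefore a vector with exactly two ones, and any two of these supports meet.
Pairwise intersecting pairs form a star or a triangle. After permuting rows, the centre of a star
becomes the first row and each column is a column of `M_r`; a triangle on the first three rows
gives exactly the columns of `L_r`.
-/

open Submodule (span)

lemma exists_injective_range_eq_of_ncard_eq {s : Set α} {n : ℕ} (hs : s.ncard = n) (hn : n ≠ 0) :
    ∃ f : Fin n → α, Function.Injective f ∧ range f = s := by
  have hcard : Nat.card s = n := hs
  have : Finite s := Nat.finite_of_card_ne_zero (hcard ▸ hn)
  set f := Finite.equivFinOfCardEq hcard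
  exact ⟨Subtype.val ∘ f.symm, Subtype.val_injective.comp f.symm.injective,
    by rw [f.symm.surjective.range_comp, Subtype.range_coe]⟩

section Matroid

variable {M : Matroid α} {B C X : Set α} {e : α}

lemma circuit_iff_isCircuit : Circuit M C ↔ M.IsCircuit C :=
  Matroid.isCircuit_iff.symm

lemma rank_eq_ncard (hB : M.IsBase B) : rank M = B.ncard := by
  have : {n | ∃ B', M.IsBase B' ∧ B'.ncard = n} = {B.ncard} := by
    ext n
    constructor
    · rintro ⟨B', hB', rfl⟩
      exact hB'.ncard_eq_ncard_of_isBase hB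
    · rintro rfl
      exact ⟨B, hB, rfl⟩
  rw [rank, this, csInf_singleton]

/-- The fundamental circuit of `e` in a basis of `X` has at most `|X| + 1` elements. -/
lemma Loose.rank_le_ncard_add_one (he : Loose M e) (hX : X.Finite) (heX : e ∉ X)
    (hcl : e ∈ M.closure X) : rank M ≤ X.ncard + 1 := by
  obtain ⟨I, hI⟩ := M.exists_isBasis' X
  have heI : e ∉ I := fun h ↦ heX (hI.subset h)
  have hC := hI.indep.fundCircuit_isCircuit (hI.closure_eq_closure ▸ hcl) heI
  calc rank M ≤ (M.fundCircuit e I).ncard :=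
        he.2 _ (circuit_iff_isCircuit.2 hC) (M.mem_fundCircuit e I)
    _ ≤ (insert e I).ncard :=
        ncard_le_ncard (M.fundCircuit_subset_insert e I) ((hX.subset hI.subset).insert e)
    _ ≤ I.ncard + 1 := ncard_insert_le e I
    _ ≤ X.ncard + 1 := Nat.add_le_add_right (ncard_le_ncard hI.subset hX) 1

end Matroid

section Representation

variable {F : Type*} [Field F] {V W : Type*} [AddCommGroup V] [Module F V]
  [AddCommGroup W] [Module F W] {M : Matroid α} {v : α → V}

def IsRep (M : Matroid α) (F : Type*) [Field F] [Module F V] (v : α → V) : Prop :=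
  ∀ I ⊆ M.E, M.Indep I ↔ LinearIndepOn F v I

lemma IsRep.mem_closure_iff_of_indep (hv : IsRep M F v) {I : Set α} {x : α} (hI : M.Indep I)
    (hx : x ∈ M.E) : x ∈ M.closure I ↔ v x ∈ span F (v '' I) := by
  by_cases hxI : x ∈ I
  · exact iff_of_true (M.subset_closure I hI.subset_ground hxI)
      (Submodule.subset_span (mem_image_of_mem v hxI))
  rw [← not_iff_not, hI.notMem_closure_iff_of_notMem hxI hx,
    hv _ (insert_subset hx hI.subset_ground), linearIndepOn_insert hxI,
    ← hv I hI.subset_ground, and_iff_right hI]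

lemma IsRep.mem_closure_iff (hv : IsRep M F v) {X : Set α} {x : α} (hX : X ⊆ M.E)
    (hx : x ∈ M.E) : x ∈ M.closure X ↔ v x ∈ span F (v '' X) := by
  obtain ⟨I, hI⟩ := M.exists_isBasis X
  rw [← hI.closure_eq_closure, hv.mem_closure_iff_of_indep hI.indep hx]
  refine ⟨fun h ↦ Submodule.span_mono (image_mono hI.subset) h, fun h ↦ ?_⟩
  refine Submodule.span_le.2 ?_ h
  rintro _ ⟨y, hy, rfl⟩
  exact (hv.mem_closure_iff_of_indep hI.indep (hX hy)).1 (hI.subset_closure hy)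

lemma IsRep.of_comp {u : α → W} (hv : IsRep M F v) (Q : W →ₗ[F] V) (hQ : Function.Injective Q)
    (h : EqOn v (Q ∘ u) M.E) : IsRep M F u := fun I hI ↦ by
  rw [hv I hI, linearIndepOn_congr (h.mono hI), Q.linearIndepOn_iff_of_injOn hQ.injOn]

lemma IsRep.injOn (hv : IsRep M F v) (hM : Simple M) : InjOn v M.E := fun x hx y hy h ↦
  ((hv _ (pair_subset hx hy)).1 (hM x hx y hy)).injOn (mem_insert x _) (mem_insert_of_mem x rfl) h

lemma IsRep.ne_zero (hv : IsRep M F v) (hM : Simple M) {x : α} (hx : x ∈ M.E) : v x ≠ 0 := by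
  have := (hv {x} (singleton_subset_iff.2 hx)).1 (by simpa using hM x hx x hx)
  exact this.ne_zero (mem_singleton x)

lemma IsRep.exists_isRep_single_of_isBase {r : ℕ} (hv : IsRep M F v) {g : Fin r → α}
    (hg : Function.Injective g) (hB : M.IsBase (range g)) :
    ∃ u : α → Fin r → F, IsRep M F u ∧ ∀ i, u (g i) = Pi.single i 1 := by
  classical
  have hw : LinearIndependent F (v ∘ g) := by
    have := (hv _ hB.subset_ground).1 hB.indep
    rw [← image_univ] at this
    exact linearIndepOn_univ_iff.1 (this.comp_of_image hg.injOn)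
  set Q := Fintype.linearCombination F (v ∘ g)
  have hQ : Function.Injective Q := hw.fintypeLinearCombination_injective
  have hrange : ∀ x ∈ M.E, ∃ y, Q y = v x := by
    intro x hx
    rw [← LinearMap.mem_range, Fintype.range_linearCombination, range_comp]
    exact (hv.mem_closure_iff hB.subset_ground hx).1 (hB.closure_eq ▸ hx)
  refine ⟨fun x ↦ Function.invFun Q (v x),
    hv.of_comp Q hQ fun x hx ↦ (Function.invFun_eq (hrange x hx)).symm, fun i ↦ ?_⟩
  change Function.invFun Q (v (g i)) = _
  rw [show v (g i) = Q (Pi.single i 1) by simp [Q]]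
  exact Function.leftInverse_invFun hQ _

end Representation

section VectorMatroid

variable {F : Type*} [Field F] {V : Type*} [AddCommGroup V] [Module F V] {η ι : Type*}

lemma LinearIndepOn.exists_insert_of_encard_lt {A : η → V} {I J : Set η}
    (hI : LinearIndepOn F A I) (hJ : LinearIndepOn F A J) (hlt : I.encard < J.encard) :
    ∃ x ∈ J, x ∉ I ∧ LinearIndepOn F A (insert x I) := by
  by_contra! h
  have hle : span F (A '' J) ≤ span F (A '' I) := by
    refine Submodule.span_le.2 ?_
    rintro _ ⟨x, hx, rfl⟩
    by_cases hxI : x ∈ I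
    · exact Submodule.subset_span (mem_image_of_mem A hxI)
    · by_contra hxs
      exact h x hx hxI ((linearIndepOn_insert hxI).2 ⟨hI, hxs⟩)
  refine hlt.not_ge ?_
  rw [← toENat_rank_span_set hI, ← toENat_rank_span_set hJ]
  exact Cardinal.toENat.monotone' (Submodule.rank_mono hle)

lemma exists_isVectorMatroidOn [Finite η] (A : η → ι → F) : ∃ N, IsVectorMatroidOn F A N :=
  ⟨(IndepMatroid.ofBddAugment univ (LinearIndepOn F A) (linearIndepOn_empty F A)
    (fun _ _ hJ hIJ ↦ hJ.mono hIJ)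
    (fun _ _ hI hJ hlt ↦ LinearIndepOn.exists_insert_of_encard_lt hI hJ hlt)
    ⟨Nat.card η, fun I _ ↦ by rw [← ENat.card_eq_coe_natCard]; exact I.encard_le_card⟩
    (fun I _ ↦ subset_univ I)).matroid, rfl, fun _ ↦ Iff.rfl⟩

variable {M : Matroid α} {N : Matroid η} {u : α → ι → F} {A : η → ι → F} {φ : α → η}

lemma IsRep.isIsoTo_restrict (hu : IsRep M F u) (huinj : InjOn u M.E)
    (hN : IsVectorMatroidOn F A N) (hφ : ∀ x ∈ M.E, A (φ x) = u x) :
    IsIsoTo M (N ↾ (φ '' M.E)) φ := by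
  have hφinj : InjOn φ M.E := fun x hx y hy h ↦ huinj hx hy (by rw [← hφ x hx, ← hφ y hy, h])
  refine ⟨⟨mapsTo_image φ M.E, hφinj, surjOn_image φ M.E⟩, fun I hI ↦ ?_⟩
  rw [Matroid.restrict_indep_iff, hN.2, and_iff_left (image_mono hI), hu I hI]
  change _ ↔ LinearIndepOn F A (φ '' I)
  rw [← linearIndepOn_congr (v := A ∘ φ) fun x hx ↦ hφ x (hI hx)]
  exact ⟨fun h ↦ h.image_of_comp φ A, fun h ↦ h.comp_of_image (hφinj.mono hI)⟩

lemma IsRep.isIsoTo (hu : IsRep M F u) (huinj : InjOn u M.E) (hN : IsVectorMatroidOn F A N)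
    (hφ : ∀ x ∈ M.E, A (φ x) = u x) (hsurj : φ '' M.E = univ) : IsIsoTo M N φ := by
  simpa [hsurj, ← hN.1] using hu.isIsoTo_restrict huinj hN hφ

lemma IsRep.exists_isIsoTo_restrict (hu : IsRep M F u) (huinj : InjOn u M.E)
    (hN : IsVectorMatroidOn F A N) (hcol : ∀ x ∈ M.E, ∃ j, A j = u x) {e : α} {z : η}
    (hz : A z = u e) : ∃ φ : α → η, IsIsoTo M (N ↾ (φ '' M.E)) φ ∧ φ e = z := by
  classical
  have : Nonempty η := ⟨z⟩
  choose! φ hφ using hcol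
  refine ⟨Function.update φ e z, hu.isIsoTo_restrict huinj hN fun x hx ↦ ?_,
    Function.update_self e z φ⟩
  obtain rfl | hxe := eq_or_ne x e
  · simpa using hz
  · simpa [hxe] using hφ x hx

end VectorMatroid

section Binary

def supp {ι R : Type*} [Fintype ι] [Zero R] [DecidableEq R] (y : ι → R) : Finset ι :=
  {i | y i ≠ 0}

@[simp]
lemma mem_supp {ι R : Type*} [Fintype ι] [Zero R] [DecidableEq R] {y : ι → R} {i : ι} :
    i ∈ supp y ↔ y i ≠ 0 := by
  simp [supp]

lemma card_supp {ι R : Type*} [Fintype ι] [Zero R] [DecidableEq R] (y : ι → R) :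
    (supp y).card = hammingNorm y := rfl

lemma supp_comp_perm {ι R : Type*} [Fintype ι] [Zero R] [DecidableEq R] (y : ι → R)
    (σ : Equiv.Perm ι) : supp (y ∘ σ) = (supp y).map σ.symm.toEmbedding := by
  ext i
  simp [Finset.mem_map_equiv]

lemma zmod_two_ne_zero_iff {a : ZMod 2} : a ≠ 0 ↔ a = 1 := by
  revert a
  decide

lemma hammingNorm_one_sub_add {ι : Type*} [Fintype ι] (y : ι → ZMod 2) :
    hammingNorm (1 - y) + hammingNorm y = Fintype.card ι := by
  have h1 : supp (1 - y) = ({i | y i = 0} : Finset ι) := by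
    ext i
    by_cases h : y i = 0 <;> simp [h, eq_comm, zmod_two_ne_zero_iff.1]
  rw [← card_supp, ← card_supp, h1, supp, Finset.card_filter_add_card_filter_not,
    Finset.card_univ]

variable {ι : Type*} [Fintype ι] [DecidableEq ι]

lemma hammingNorm_add_of_disjoint {R : Type*} [AddMonoid R] [DecidableEq R] {y y' : ι → R}
    (h : Disjoint (supp y) (supp y')) :
    hammingNorm (y + y') = hammingNorm y + hammingNorm y' := by
  rw [← card_supp, ← card_supp, ← card_supp, ← Finset.card_union_of_disjoint h]
  congr 1
  ext i
  by_cases hy : y i = 0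
  · simp [hy]
  · have hy' : y' i = 0 := by simpa using Finset.disjoint_left.1 h (mem_supp.2 hy)
    simp [hy, hy']

lemma apply_eq_ite_mem_supp (y : ι → ZMod 2) (i : ι) : y i = if i ∈ supp y then 1 else 0 := by
  by_cases h : y i = 0 <;> simp [h, zmod_two_ne_zero_iff.1]

lemma eq_of_supp_eq {y y' : ι → ZMod 2} (h : supp y = supp y') : y = y' := by
  ext i
  rw [apply_eq_ite_mem_supp y, apply_eq_ite_mem_supp y', h]

lemma sum_single_supp (y : ι → ZMod 2) : ∑ i ∈ supp y, Pi.single i 1 = y := by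
  ext k
  rw [Finset.sum_apply, apply_eq_ite_mem_supp y k]
  simp [Pi.single_apply]

lemma eq_single_of_hammingNorm_eq_one {y : ι → ZMod 2} (h : hammingNorm y = 1) :
    ∃ i, y = Pi.single i 1 := by
  obtain ⟨i, hi⟩ := Finset.card_eq_one.1 (h : (supp y).card = 1)
  exact ⟨i, by rw [← sum_single_supp y, show supp y = {i} from hi, Finset.sum_singleton]⟩

end Binary

section Pairs

variable {β : Type*} [DecidableEq β] {s : Finset β} {a b : β}

lemma eq_pair_of_card_eq_two (hs : s.card = 2) (ha : a ∈ s) (hb : b ∈ s) (hab : a ≠ b) :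
    s = {a, b} :=
  (Finset.eq_of_subset_of_card_le (Finset.insert_subset ha (Finset.singleton_subset_iff.2 hb))
    (by rw [hs, Finset.card_pair hab])).symm

lemma exists_eq_pair_of_card_eq_two (hs : s.card = 2) (ha : a ∈ s) :
    ∃ b, a ≠ b ∧ s = {a, b} := by
  obtain ⟨x, y, hxy, rfl⟩ := Finset.card_eq_two.1 hs
  obtain rfl | rfl : a = x ∨ a = y := by simpa using ha
  · exact ⟨y, hxy, rfl⟩
  · exact ⟨x, hxy.symm, Finset.pair_comm x a⟩

lemma mem_or_mem_of_not_disjoint_pair (h : ¬Disjoint s {a, b}) : a ∈ s ∨ b ∈ s := by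
  simpa [Finset.disjoint_insert_right, or_iff_not_imp_left] using h

lemma exists_mem_all_or_eq_triangle [Nonempty β] {𝓕 : Set (Finset β)}
    (h𝓕 : 𝓕.Intersecting) (h2 : ∀ s ∈ 𝓕, s.card = 2) :
    (∃ p, ∀ s ∈ 𝓕, p ∈ s) ∨
      ∃ a b c, a ≠ b ∧ a ≠ c ∧ b ≠ c ∧ 𝓕 = {{a, b}, {a, c}, {b, c}} := by
  refine or_iff_not_imp_left.2 fun hp ↦ ?_
  push Not at hp
  have meet {s t : Finset β} (hs : s ∈ 𝓕) (ht : t ∈ 𝓕) {a b : β} (hab : t = {a, b}) :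
      a ∈ s ∨ b ∈ s :=
    mem_or_mem_of_not_disjoint_pair (hab ▸ h𝓕 hs ht)
  obtain ⟨s₁, hs₁, -⟩ := hp (Classical.arbitrary β)
  obtain ⟨a, b, hab, rfl⟩ := Finset.card_eq_two.1 (h2 _ hs₁)
  obtain ⟨s₂, hs₂, has₂⟩ := hp a
  obtain ⟨c, hbc, rfl⟩ :=
    exists_eq_pair_of_card_eq_two (h2 _ hs₂) ((meet hs₂ hs₁ rfl).resolve_left has₂)
  have hac : a ≠ c := fun h ↦ has₂ (by simp [h])
  obtain ⟨s₃, hs₃, hbs₃⟩ := hp b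
  obtain rfl : s₃ = {a, c} := eq_pair_of_card_eq_two (h2 _ hs₃)
    ((meet hs₃ hs₁ rfl).resolve_right hbs₃) ((meet hs₃ hs₂ rfl).resolve_left hbs₃) hac
  refine ⟨a, b, c, hab, hac, hbc, Set.ext fun s ↦ ⟨fun hs ↦ ?_, ?_⟩⟩
  · have hs2 := h2 s hs
    simp only [Set.mem_insert_iff, Set.mem_singleton_iff]
    by_cases ha : a ∈ s
    · by_cases hb : b ∈ s
      · exact .inl (eq_pair_of_card_eq_two hs2 ha hb hab)
      · exact .inr (.inl (eq_pair_of_card_eq_two hs2 ha ((meet hs hs₂ rfl).resolve_left hb) hac))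
    · exact .inr (.inr (eq_pair_of_card_eq_two hs2 ((meet hs hs₁ rfl).resolve_left ha)
        ((meet hs hs₃ rfl).resolve_left ha) hbc))
  · rintro (rfl | rfl | rfl) <;> assumption

end Pairs

section StandardRep

variable {r : ℕ} {M : Matroid α} {u : α → Fin r → ZMod 2} {g : Fin r → α} {e x : α}

structure IsStandardRep (M : Matroid α) (u : α → Fin r → ZMod 2) (g : Fin r → α) (e : α) :
    Prop where
  isRep : IsRep M (ZMod 2) u
  injOn : InjOn u M.E
  ne_zero : ∀ x ∈ M.E, u x ≠ 0
  apply_basis : ∀ i, u (g i) = Pi.single i 1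
  range_subset : range g ⊆ M.E
  notMem_range : e ∉ range g
  mem_ground : e ∈ M.E
  apply_eq_one : u e = 1

lemma IsRep.exists_isStandardRep {V : Type*} [AddCommGroup V] [Module (ZMod 2) V] {v : α → V}
    (hv : IsRep M (ZMod 2) v) (hM : Simple M) (hg : Function.Injective g)
    (hB : M.IsBase (range g)) (hcirc : Circuit M (insert e (range g))) :
    ∃ u, IsStandardRep M u g e := by
  classical
  obtain ⟨u, hu, hug⟩ := hv.exists_isRep_single_of_isBase hg hB
  have heg : e ∉ range g := fun he ↦
    hcirc.1.not_indep (by rw [insert_eq_of_mem he]; exact hB.indep)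
  refine ⟨u, hu, hu.injOn hM, fun x ↦ hu.ne_zero hM, hug, hB.subset_ground, heg,
    hcirc.1.subset_ground (mem_insert e _), ?_⟩
  set C := insert e (g '' supp (u e))
  have hCsub : C ⊆ insert e (range g) := insert_subset_insert (image_subset_range g _)
  have hCE : C ⊆ M.E := hCsub.trans hcirc.1.subset_ground
  have hspan : u e ∈ span (ZMod 2) (u '' (g '' supp (u e))) := by
    have := Submodule.sum_mem (span (ZMod 2) (u '' (g '' supp (u e))))
      fun i (hi : i ∈ supp (u e)) ↦ Submodule.subset_span ⟨g i, mem_image_of_mem g hi, hug i⟩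
    rwa [sum_single_supp] at this
  have hdep : M.Dep C := by
    refine ⟨fun hC ↦ ?_, hCE⟩
    have := (hu C hCE).1 hC
    rw [linearIndepOn_insert fun h ↦ heg (image_subset_range g _ h)] at this
    exact this.2 hspan
  ext i
  obtain h | ⟨j, hj, hji⟩ : g i ∈ C :=
    hcirc.2 C hdep hCsub ▸ mem_insert_of_mem e (mem_range_self i)
  · exact absurd ⟨i, h⟩ heg
  · rw [Pi.one_apply, ← zmod_two_ne_zero_iff, ← mem_supp, ← hg hji]
    exact hj

namespace IsStandardRep

lemma injective (h : IsStandardRep M u g e) : Function.Injective g := fun i j hij ↦ by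
  simpa [h.apply_basis, Pi.single_apply] using congrFun (congrArg u hij) i

lemma comp_perm (h : IsStandardRep M u g e) (σ : Equiv.Perm (Fin r)) :
    IsStandardRep M (fun x ↦ u x ∘ σ) (g ∘ σ) e where
  isRep := h.isRep.of_comp (LinearMap.funLeft (ZMod 2) (ZMod 2) σ.symm)
    (LinearMap.funLeft_injective_of_surjective _ _ _ σ.symm.surjective)
    fun x _ ↦ by ext k; simp [LinearMap.funLeft_apply]
  injOn _ hx _ hy hxy := h.injOn hx hy (σ.surjective.injective_comp_right hxy)
  ne_zero x hx hx0 := h.ne_zero x hx (σ.surjective.injective_comp_right hx0)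
  apply_basis i := by ext k; simp [h.apply_basis, Pi.single_apply]
  range_subset := (range_comp_subset_range σ g).trans h.range_subset
  notMem_range he := h.notMem_range (range_comp_subset_range σ g he)
  mem_ground := h.mem_ground
  apply_eq_one := by simp [h.apply_eq_one]

/-- `e` is spanned by `Y` and the basis elements outside the support of the sum, and looseness
bounds the number of these from below. -/
lemma hammingNorm_sum_le (h : IsStandardRep M u g e) (hloose : Loose M e) (hrank : rank M = r)
    {Y : Finset α} (hYE : ↑Y ⊆ M.E) (heY : e ∉ Y) :
    hammingNorm (∑ y ∈ Y, u y) ≤ Y.card + 1 := by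
  classical
  set s := ∑ y ∈ Y, u y
  set X := Y ∪ (supp (1 - s)).image g
  have hXE : (X : Set α) ⊆ M.E := by
    rw [Finset.coe_union, Finset.coe_image]
    exact union_subset hYE ((image_subset_range _ _).trans h.range_subset)
  have heX : e ∉ (X : Set α) := by
    simp only [X, Finset.coe_union, Finset.coe_image, mem_union, Finset.mem_coe, heY, false_or]
    exact fun he ↦ h.notMem_range (image_subset_range _ _ he)
  have hspan : u e ∈ span (ZMod 2) (u '' X) := by
    rw [h.apply_eq_one, ← add_sub_cancel s 1, ← sum_single_supp (1 - s)]
    refine add_mem (Submodule.sum_mem _ fun y hy ↦ Submodule.subset_span ⟨y, ?_, rfl⟩)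
      (Submodule.sum_mem _ fun i hi ↦ Submodule.subset_span ⟨g i, ?_, h.apply_basis i⟩)
    · simp [X, hy]
    · exact Finset.mem_union_right _ (Finset.mem_image_of_mem g hi)
  have hbound := hloose.rank_le_ncard_add_one X.finite_toSet heX
    ((h.isRep.mem_closure_iff hXE h.mem_ground).2 hspan)
  have hX : X.card ≤ Y.card + hammingNorm (1 - s) :=
    (Finset.card_union_le _ _).trans (Nat.add_le_add_left Finset.card_image_le _)
  have hcard := hammingNorm_one_sub_add s
  rw [hrank, ncard_coe_finset] at hbound
  rw [Fintype.card_fin] at hcard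
  omega

lemma card_supp_eq_two (h : IsStandardRep M u g e) (hloose : Loose M e) (hrank : rank M = r)
    (hx : x ∈ M.E \ insert e (range g)) : (supp (u x)).card = 2 := by
  classical
  obtain ⟨hxE, hxe⟩ := hx
  rw [mem_insert_iff, not_or] at hxe
  have hle := h.hammingNorm_sum_le hloose hrank (Y := {x}) (by simpa using hxE)
    (by simpa [eq_comm] using hxe.1)
  rw [Finset.sum_singleton, Finset.card_singleton] at hle
  have h0 : hammingNorm (u x) ≠ 0 := hammingNorm_ne_zero_iff.2 (h.ne_zero x hxE)
  have h1 : hammingNorm (u x) ≠ 1 := fun h1 ↦ by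
    obtain ⟨i, hi⟩ := eq_single_of_hammingNorm_eq_one h1
    exact hxe.2 ⟨i, h.injOn (h.range_subset (mem_range_self i)) hxE (by rw [h.apply_basis, hi])⟩
  rw [card_supp]
  omega

/-- Two disjoint supports would give a sum of two elements of weight `4`. -/
lemma intersecting (h : IsStandardRep M u g e) (hloose : Loose M e) (hrank : rank M = r) :
    ((fun x ↦ supp (u x)) '' (M.E \ insert e (range g))).Intersecting := by
  classical
  rintro _ ⟨x, hx, rfl⟩ _ ⟨x', hx', rfl⟩ hdisj
  have hx2 := h.card_supp_eq_two hloose hrank hx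
  obtain rfl | hne := eq_or_ne x x'
  · rw [Finset.disjoint_self_iff_empty] at hdisj
    simp [hdisj] at hx2
  have hle := h.hammingNorm_sum_le hloose hrank (Y := {x, x'})
    (by simpa using pair_subset hx.1 hx'.1)
    (by simpa [eq_comm] using And.intro (fun h ↦ hx.2 (.inl h)) (fun h ↦ hx'.2 (.inl h)))
  rw [Finset.sum_pair hne, Finset.card_pair hne, hammingNorm_add_of_disjoint hdisj, ← card_supp,
    ← card_supp, hx2, h.card_supp_eq_two hloose hrank hx'] at hle
  omega

end IsStandardRep

end StandardRep

section Columns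

variable {r : ℕ}

lemma MrMatrix_inl (i : Fin r) : MrMatrix r (Sum.inl i) = Pi.single i 1 := by
  ext k
  simp [MrMatrix, Pi.single_apply]

lemma MrMatrix_inr_zero (hr : 0 < r) : MrMatrix r (Sum.inr ⟨0, hr⟩) = 1 := by
  ext k
  simp [MrMatrix]

lemma supp_MrMatrix_inr (hr : 0 < r) {q : Fin r} (hq : q ≠ ⟨0, hr⟩) :
    supp (MrMatrix r (Sum.inr q)) = {⟨0, hr⟩, q} := by
  have hq' : q.val ≠ 0 := fun h ↦ hq (Fin.ext h)
  ext k
  simp [MrMatrix, hq', Fin.ext_iff, or_iff_not_imp_left]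

lemma LrMatrix_inl (i : Fin r) : LrMatrix r (Sum.inl i) = Pi.single i 1 := by
  ext k
  simp [LrMatrix, Pi.single_apply]

lemma LrMatrix_inr_zero : LrMatrix r (Sum.inr 0) = 1 := by
  ext k
  simp [LrMatrix]

def lrTriangle (hr : 3 ≤ r) : Set (Finset (Fin r)) :=
  {{Fin.castLE hr 0, Fin.castLE hr 1}, {Fin.castLE hr 0, Fin.castLE hr 2},
    {Fin.castLE hr 1, Fin.castLE hr 2}}

/-- The `j` for which the column `inr j` of `L_r` has support `S`. -/
def lrIndex (hr : 3 ≤ r) (S : Finset (Fin r)) : Fin 4 :=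
  if Fin.castLE hr 0 ∉ S then 3 else if Fin.castLE hr 1 ∈ S then 1 else 2

lemma supp_LrMatrix_lrIndex (hr : 3 ≤ r) {S : Finset (Fin r)} (hS : S ∈ lrTriangle hr) :
    supp (LrMatrix r (Sum.inr (lrIndex hr S))) = S := by
  simp only [lrTriangle, mem_insert_iff, mem_singleton_iff] at hS
  obtain rfl | rfl | rfl := hS <;> ext k <;>
    simp [lrIndex, LrMatrix, Fin.ext_iff, or_iff_not_imp_left]

lemma exists_lrIndex_eq (hr : 3 ≤ r) {j : Fin 4} (hj : j ≠ 0) :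
    ∃ S ∈ lrTriangle hr, lrIndex hr S = j := by
  fin_cases j
  · exact absurd rfl hj
  · exact ⟨_, .inl rfl, by simp [lrIndex, Fin.ext_iff]⟩
  · exact ⟨_, .inr (.inl rfl), by simp [lrIndex, Fin.ext_iff]⟩
  · exact ⟨_, .inr (.inr rfl), by simp [lrIndex, Fin.ext_iff]⟩

end Columns

namespace IsStandardRep

variable {r : ℕ} {M : Matroid α} {u : α → Fin r → ZMod 2} {g : Fin r → α} {e : α}

lemma exists_isIsoTo_restrict_MrMatrix_of_zero_mem (h : IsStandardRep M u g e)
    (hloose : Loose M e) (hrank : rank M = r) (hr : 0 < r)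
    (hstar : ∀ x ∈ M.E \ insert e (range g), ⟨0, hr⟩ ∈ supp (u x)) :
    ∃ MM : Matroid (Fin r ⊕ Fin r), IsVectorMatroidOn (ZMod 2) (MrMatrix r) MM ∧
      ∃ R : Set (Fin r ⊕ Fin r), Sum.inr ⟨0, hr⟩ ∈ R ∧
        ∃ φ, IsIsoTo M (MM ↾ R) φ ∧ φ e = Sum.inr ⟨0, hr⟩ := by
  obtain ⟨MM, hMM⟩ := exists_isVectorMatroidOn (F := ZMod 2) (MrMatrix r)
  have hcol : ∀ x ∈ M.E, ∃ j, MrMatrix r j = u x := by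
    intro x hx
    by_cases hxe : x = e
    · exact ⟨Sum.inr ⟨0, hr⟩, by rw [MrMatrix_inr_zero hr, hxe, h.apply_eq_one]⟩
    by_cases hxg : x ∈ range g
    · obtain ⟨i, rfl⟩ := hxg
      exact ⟨Sum.inl i, by rw [MrMatrix_inl, h.apply_basis]⟩
    have hxD : x ∈ M.E \ insert e (range g) := ⟨hx, by simp [hxe, hxg]⟩
    obtain ⟨q, hq, hsupp⟩ :=
      exists_eq_pair_of_card_eq_two (h.card_supp_eq_two hloose hrank hxD) (hstar x hxD)
    exact ⟨Sum.inr q, eq_of_supp_eq (by rw [supp_MrMatrix_inr hr (Ne.symm hq), hsupp])⟩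
  obtain ⟨φ, hφ, hφe⟩ := h.isRep.exists_isIsoTo_restrict h.injOn hMM hcol
    (by rw [MrMatrix_inr_zero hr, h.apply_eq_one])
  exact ⟨MM, hMM, _, hφe ▸ mem_image_of_mem φ h.mem_ground, φ, hφ, hφe⟩

lemma exists_isIsoTo_restrict_MrMatrix (h : IsStandardRep M u g e) (hloose : Loose M e)
    (hrank : rank M = r) (hr : 0 < r) {p : Fin r}
    (hstar : ∀ x ∈ M.E \ insert e (range g), p ∈ supp (u x)) :
    ∃ MM : Matroid (Fin r ⊕ Fin r), IsVectorMatroidOn (ZMod 2) (MrMatrix r) MM ∧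
      ∃ R : Set (Fin r ⊕ Fin r), Sum.inr ⟨0, hr⟩ ∈ R ∧
        ∃ φ, IsIsoTo M (MM ↾ R) φ ∧ φ e = Sum.inr ⟨0, hr⟩ := by
  set σ := Equiv.swap ⟨0, hr⟩ p
  refine (h.comp_perm σ).exists_isIsoTo_restrict_MrMatrix_of_zero_mem hloose hrank hr
    fun x hx ↦ ?_
  rw [σ.surjective.range_comp] at hx
  simpa [σ] using hstar x hx

/-- Unlike in the star case, `φ` is given explicitly, so that it is visibly onto. -/
lemma exists_isIsoTo_LrMatrix_of_lrTriangle (h : IsStandardRep M u g e) (hr : 3 ≤ r)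
    (htri : (fun x ↦ supp (u x)) '' (M.E \ insert e (range g)) = lrTriangle hr) :
    ∃ L : Matroid (Fin r ⊕ Fin 4), IsVectorMatroidOn (ZMod 2) (LrMatrix r) L ∧
      ∃ φ, IsIsoTo M L φ ∧ φ e = Sum.inr 0 := by
  classical
  obtain ⟨L, hL⟩ := exists_isVectorMatroidOn (F := ZMod 2) (LrMatrix r)
  have : Nonempty (Fin r) := ⟨Fin.castLE hr 0⟩
  let φ : α → Fin r ⊕ Fin 4 := fun x ↦
    if x = e then Sum.inr 0
    else if x ∈ range g then Sum.inl (Function.invFun g x)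
    else Sum.inr (lrIndex hr (supp (u x)))
  have hφg (i : Fin r) : φ (g i) = Sum.inl i := by
    have : g i ≠ e := fun he ↦ h.notMem_range ⟨i, he⟩
    simp [φ, this, Function.leftInverse_invFun h.injective i]
  have hφD {x : α} (hx : x ∈ M.E \ insert e (range g)) :
      φ x = Sum.inr (lrIndex hr (supp (u x))) := by
    simp only [mem_sdiff, mem_insert_iff, not_or] at hx
    simp only [φ, if_neg hx.2.1, if_neg hx.2.2]
  have hcol : ∀ x ∈ M.E, LrMatrix r (φ x) = u x := by
    intro x hx
    by_cases hxe : x = e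
    · simp [φ, hxe, LrMatrix_inr_zero, h.apply_eq_one]
    by_cases hxg : x ∈ range g
    · obtain ⟨i, rfl⟩ := hxg
      rw [hφg, LrMatrix_inl, h.apply_basis]
    have hxD : x ∈ M.E \ insert e (range g) := ⟨hx, by simp [hxe, hxg]⟩
    rw [hφD hxD]
    exact eq_of_supp_eq (supp_LrMatrix_lrIndex hr (htri ▸ mem_image_of_mem _ hxD))
  have hsurj : φ '' M.E = univ := by
    refine eq_univ_of_forall ?_
    rintro (i | j)
    · exact ⟨g i, h.range_subset (mem_range_self i), hφg i⟩
    obtain rfl | hj := eq_or_ne j 0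
    · exact ⟨e, h.mem_ground, by simp [φ]⟩
    obtain ⟨_, hS, rfl⟩ := exists_lrIndex_eq hr hj
    obtain ⟨x, hxD, rfl⟩ := htri ▸ hS
    exact ⟨x, hxD.1, hφD hxD⟩
  exact ⟨L, hL, φ, h.isRep.isIsoTo h.injOn hL hcol hsurj, by simp [φ]⟩

lemma exists_isIsoTo_LrMatrix (h : IsStandardRep M u g e) {a b c : Fin r} (hab : a ≠ b)
    (hac : a ≠ c) (hbc : b ≠ c)
    (htri : (fun x ↦ supp (u x)) '' (M.E \ insert e (range g)) = {{a, b}, {a, c}, {b, c}}) :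
    ∃ L : Matroid (Fin r ⊕ Fin 4), IsVectorMatroidOn (ZMod 2) (LrMatrix r) L ∧
      ∃ φ, IsIsoTo M L φ ∧ φ e = Sum.inr 0 := by
  have hr : 3 ≤ r := by
    simpa [Finset.card_eq_three.2 ⟨a, b, c, hab, hac, hbc, rfl⟩] using
      Finset.card_le_univ ({a, b, c} : Finset (Fin r))
  obtain ⟨σ, hσ⟩ := Equiv.Perm.exists_extending_pair (Fin.castLE hr) ![a, b, c]
    (Fin.castLE_injective hr)
    (by intro i j hij; fin_cases i <;> fin_cases j <;> simp_all [eq_comm])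
  have ha : σ.symm a = Fin.castLE hr 0 := by rw [Equiv.symm_apply_eq, hσ]; rfl
  have hb : σ.symm b = Fin.castLE hr 1 := by rw [Equiv.symm_apply_eq, hσ]; rfl
  have hc : σ.symm c = Fin.castLE hr 2 := by rw [Equiv.symm_apply_eq, hσ]; rfl
  refine (h.comp_perm σ).exists_isIsoTo_LrMatrix_of_lrTriangle hr ?_
  rw [σ.surjective.range_comp, show (fun x ↦ supp (u x ∘ σ)) =
    (Finset.map σ.symm.toEmbedding) ∘ fun x ↦ supp (u x) from funext fun x ↦ supp_comp_perm _ σ,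
    image_comp, htri]
  simp [lrTriangle, image_insert_eq, ha, hb, hc]

end IsStandardRep

/-- first case of the proof of Theorem 1.1: if a simple binary
matroid of rank `r ≥ 2` has a loose element `e` and a basis `B` with `B ∪ {e}` a
circuit, then it is isomorphic to `L_r` (with `e` corresponding to the all-ones
column), or to a restriction of `M_r` containing `z` with `e` corresponding to `z`. -/
theorem binary_loose_spanning_case {α : Type*} (r : ℕ) (hr : 2 ≤ r)
    (M : Matroid α) (hsimple : Simple M) (hbinary : Representable M (ZMod 2))
    (hrank : rank M = r) (e : α) (hloose : Loose M e)
    (B : Set α) (hB : M.IsBase B) (hcirc : Circuit M (insert e B)) :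
    (∃ L : Matroid (Fin r ⊕ Fin 4),
        IsVectorMatroidOn (ZMod 2) (LrMatrix r) L ∧
        ∃ φ, IsIsoTo M L φ ∧ φ e = Sum.inr 0) ∨
    (∃ MM : Matroid (Fin r ⊕ Fin r),
        IsVectorMatroidOn (ZMod 2) (MrMatrix r) MM ∧
        ∃ R : Set (Fin r ⊕ Fin r), Sum.inr (⟨0, by omega⟩ : Fin r) ∈ R ∧
          ∃ φ, IsIsoTo M (MM ↾ R) φ ∧ φ e = Sum.inr (⟨0, by omega⟩ : Fin r)) := by
  obtain ⟨ι, v, hv⟩ := hbinary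
  obtain ⟨g, hg, rfl⟩ :=
    exists_injective_range_eq_of_ncard_eq ((rank_eq_ncard hB).symm.trans hrank) (by omega)
  obtain ⟨u, h⟩ := IsRep.exists_isStandardRep hv hsimple hg hB hcirc
  have : Nonempty (Fin r) := ⟨⟨0, by omega⟩⟩
  obtain ⟨p, hp⟩ | ⟨a, b, c, hab, hac, hbc, htri⟩ :=
    exists_mem_all_or_eq_triangle (h.intersecting hloose hrank)
      (by rintro _ ⟨x, hx, rfl⟩; exact h.card_supp_eq_two hloose hrank hx)
  · exact .inr (h.exists_isIsoTo_restrict_MrMatrix hloose hrank (by omega)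
      fun x hx ↦ hp _ (mem_image_of_mem _ hx))
  · exact .inl (h.exists_isIsoTo_LrMatrix hab hac hbc htri)

end LoosePaper
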